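/- Let r ∈ (0,1) and let p ∈ 𝒱_r be given by p(z) = ∫_𝕋 K_r(z/ξ) dμ₁(ξ) + ∫_𝕋 [1 − K_r(rξ/z)] dμ₂(ξ) with μ₁, μ₂ positive Borel measures on the unit circle 𝕋 with μ₁(𝕋) + μ₂(𝕋) = 1. Then for all z ∈ 𝔸_r, −Re p(z) ≤ (K_r(r/|z|) − 1)·μ₂(𝕋) ≤ 4r(1−|z|)·μ₂(𝕋)/((|z|−r)(1−r)²). -/

import Mathlib

open Complex Set MeasureTheory

/-- The Villat kernel `K_r(z) = 1 + 2 ∑_{k≥1} (z^k − r^{2k} z^{−k})/(1 − r^{2k})`. -/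
noncomputable def villatK (r : ℝ) (z : ℂ) : ℂ :=
  1 + 2 * ∑' k : ℕ,
    ((z ^ (k + 1) - (r : ℂ) ^ (2 * (k + 1)) * z⁻¹ ^ (k + 1)) /
      (1 - (r : ℂ) ^ (2 * (k + 1))))

/-- `p` belongs to the class `𝒱_r`, represented by positive Borel measures `μ₁, μ₂` on the
unit circle with `μ₁(𝕋) + μ₂(𝕋) = 1`, via the Villat–Stieltjes formula. -/
structure IsVillatRep (r : ℝ) (μ₁ μ₂ : Measure ℂ) (p : ℂ → ℂ) : Prop where
  finite₁ : IsFiniteMeasure μ₁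
  finite₂ : IsFiniteMeasure μ₂
  circle₁ : μ₁ {ξ : ℂ | ‖ξ‖ ≠ 1} = 0
  circle₂ : μ₂ {ξ : ℂ | ‖ξ‖ ≠ 1} = 0
  mass : (μ₁ Set.univ).toReal + (μ₂ Set.univ).toReal = 1
  repr : ∀ z : ℂ, r < ‖z‖ → ‖z‖ < 1 →
    p z = (∫ ξ, villatK r (z / ξ) ∂μ₁) + ∫ ξ, (1 - villatK r ((r : ℂ) * ξ / z)) ∂μ₂

/-!
Splitting off the geometric part, `K_r(w) = (1 + w)/(1 - w) + 2 E_r(w)`, where the correction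
`E_r = corr r` is continuous on the closed annulus `r ≤ |w| ≤ 1`, holomorphic inside, and has
vanishing real part on `|w| = 1`; moreover `Re K_r = 1` on `|w| = r`. The factor `1 - w` tames the pole at
`w = 1`, so the maximum modulus principle applies to `(1 - w) exp (-t K_r(w))`, whose modulus is
at most `2` on the boundary; letting `t → ∞` gives `Re K_r ≥ 0` on the annulus.
Termwise, `Re K_r(w) ≤ K_r(|w|)`, and the series of `K_r(r/ρ)` is dominated by a difference of
two geometric series. Integrating against `μ₁` and `μ₂` gives both inequalities.
-/

namespace Villat

open Filter Topology Metric

variable {r : ℝ} {w z : ℂ}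

noncomputable def term (r : ℝ) (z : ℂ) (k : ℕ) : ℂ :=
  (z ^ (k + 1) - (r : ℂ) ^ (2 * (k + 1)) * z⁻¹ ^ (k + 1)) / (1 - (r : ℂ) ^ (2 * (k + 1)))

lemma villatK_eq_tsum_term (r : ℝ) (z : ℂ) : villatK r z = 1 + 2 * ∑' k, term r z k := rfl

noncomputable def corrTerm (r : ℝ) (z : ℂ) (k : ℕ) : ℂ :=
  (r : ℂ) ^ (2 * (k + 1)) * (z ^ (k + 1) - z⁻¹ ^ (k + 1)) / (1 - (r : ℂ) ^ (2 * (k + 1)))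

noncomputable def corr (r : ℝ) (z : ℂ) : ℂ := ∑' k, corrTerm r z k

noncomputable def kernelExt (r : ℝ) (w : ℂ) : ℂ := (1 + w) / (1 - w) + 2 * corr r w

lemma one_sub_sq_le_one_sub_pow (hr0 : 0 ≤ r) (hr1 : r ≤ 1) (k : ℕ) :
    1 - r ^ 2 ≤ 1 - r ^ (2 * (k + 1)) := by
  linarith [pow_le_pow_of_le_one hr0 hr1 (show 2 ≤ 2 * (k + 1) by omega)]

lemma norm_one_sub_pow (hr0 : 0 ≤ r) (hr1 : r ≤ 1) (n : ℕ) :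
    ‖(1 : ℂ) - (r : ℂ) ^ n‖ = 1 - r ^ n := by
  rw [← ofReal_pow, ← ofReal_one, ← ofReal_sub, norm_real,
    Real.norm_of_nonneg (sub_nonneg.mpr (pow_le_one₀ hr0 hr1))]

lemma one_sub_pow_pos (hr0 : 0 ≤ r) (hr1 : r < 1) (k : ℕ) : 0 < 1 - r ^ (2 * (k + 1)) :=
  sub_pos.mpr (pow_lt_one₀ hr0 hr1 (by omega))

lemma one_sub_pow_ne_zero (hr0 : 0 ≤ r) (hr1 : r < 1) (k : ℕ) :
    (1 : ℂ) - (r : ℂ) ^ (2 * (k + 1)) ≠ 0 := by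
  rw [← norm_pos_iff, norm_one_sub_pow hr0 hr1.le]
  exact one_sub_pow_pos hr0 hr1 k

lemma norm_corrTerm_le (hr0 : 0 < r) (hr1 : r < 1) (hz1 : r ≤ ‖z‖) (hz2 : ‖z‖ ≤ 1) (k : ℕ) :
    ‖corrTerm r z k‖ ≤ 2 * r ^ (k + 1) / (1 - r ^ 2) := by
  have hz0 : 0 < ‖z‖ := hr0.trans_le hz1
  rw [corrTerm, norm_div, norm_mul, norm_one_sub_pow hr0.le hr1.le, norm_pow, norm_real,
    Real.norm_of_nonneg hr0.le]
  have hout : r ^ (2 * (k + 1)) * ‖z‖ ^ (k + 1) ≤ r ^ (k + 1) := by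
    calc r ^ (2 * (k + 1)) * ‖z‖ ^ (k + 1) ≤ r ^ (2 * (k + 1)) * 1 := by
          gcongr; exact pow_le_one₀ hz0.le hz2
      _ ≤ r ^ (k + 1) := by
          rw [mul_one]; exact pow_le_pow_of_le_one hr0.le hr1.le (by omega)
  have hin : r ^ (2 * (k + 1)) * ‖z‖⁻¹ ^ (k + 1) ≤ r ^ (k + 1) := by
    rw [two_mul, pow_add, mul_assoc, ← mul_pow, ← div_eq_mul_inv]
    exact mul_le_of_le_one_right (by positivity)
      (pow_le_one₀ (by positivity) ((div_le_one hz0).mpr hz1))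
  have hnum : r ^ (2 * (k + 1)) * ‖z ^ (k + 1) - z⁻¹ ^ (k + 1)‖ ≤ 2 * r ^ (k + 1) := by
    calc r ^ (2 * (k + 1)) * ‖z ^ (k + 1) - z⁻¹ ^ (k + 1)‖
        ≤ r ^ (2 * (k + 1)) * (‖z‖ ^ (k + 1) + ‖z‖⁻¹ ^ (k + 1)) := by
          gcongr
          simpa only [norm_pow, norm_inv] using norm_sub_le (z ^ (k + 1)) (z⁻¹ ^ (k + 1))
      _ ≤ 2 * r ^ (k + 1) := by linarith
  exact div_le_div₀ (by positivity) hnum (by nlinarith)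
    (one_sub_sq_le_one_sub_pow hr0.le hr1.le k)

lemma hasSum_pow_succ {a : ℝ} (h0 : 0 ≤ a) (h1 : a < 1) :
    HasSum (fun k : ℕ => a ^ (k + 1)) (a / (1 - a)) := by
  simpa only [← pow_succ', div_eq_mul_inv] using (hasSum_geometric_of_lt_one h0 h1).mul_left a

lemma summable_corrBound (hr0 : 0 ≤ r) (hr1 : r < 1) :
    Summable fun k : ℕ => 2 * r ^ (k + 1) / (1 - r ^ 2) :=
  ((hasSum_pow_succ hr0 hr1).summable.mul_left 2).div_const _

lemma summable_corrTerm (hr0 : 0 < r) (hr1 : r < 1) (hz1 : r ≤ ‖z‖) (hz2 : ‖z‖ ≤ 1) :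
    Summable (corrTerm r z) :=
  (summable_corrBound hr0.le hr1).of_norm_bounded (norm_corrTerm_le hr0 hr1 hz1 hz2)

lemma exists_norm_corr_le (hr0 : 0 < r) (hr1 : r < 1) :
    ∃ C, ∀ z : ℂ, r ≤ ‖z‖ → ‖z‖ ≤ 1 → ‖corr r z‖ ≤ C :=
  ⟨_, fun _ hz1 hz2 =>
    tsum_of_norm_bounded (summable_corrBound hr0.le hr1).hasSum (norm_corrTerm_le hr0 hr1 hz1 hz2)⟩

lemma term_eq_add_corrTerm (hr0 : 0 ≤ r) (hr1 : r < 1) (z : ℂ) (k : ℕ) :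
    term r z k = z ^ (k + 1) + corrTerm r z k := by
  have := one_sub_pow_ne_zero hr0 hr1 k
  rw [term, corrTerm]
  field_simp
  ring

lemma one_sub_ne_zero_of_norm_lt_one (hw : ‖w‖ < 1) : 1 - w ≠ 0 := by
  rw [sub_ne_zero]; rintro rfl; simp at hw

lemma summable_pow_succ {w : ℂ} (hw : ‖w‖ < 1) : Summable fun k : ℕ => w ^ (k + 1) :=
  (summable_geometric_of_norm_lt_one hw).mul_left w |>.congr fun k => (pow_succ' w k).symm

lemma summable_term (hr0 : 0 < r) (hr1 : r < 1) (hz1 : r ≤ ‖z‖) (hz2 : ‖z‖ < 1) :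
    Summable (term r z) :=
  ((summable_pow_succ hz2).add (summable_corrTerm hr0 hr1 hz1 hz2.le)).congr
    fun k => (term_eq_add_corrTerm hr0.le hr1 z k).symm

lemma villatK_eq_kernelExt (hr0 : 0 < r) (hr1 : r < 1) (hz1 : r ≤ ‖z‖) (hz2 : ‖z‖ < 1) :
    villatK r z = kernelExt r z := by
  have hz := one_sub_ne_zero_of_norm_lt_one hz2
  have hgeom : ∑' k : ℕ, z ^ (k + 1) = z / (1 - z) := by
    simp_rw [pow_succ']
    rw [tsum_mul_left, tsum_geometric_of_norm_lt_one hz2, div_eq_mul_inv]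
  have hsplit : ∑' k, term r z k = z / (1 - z) + corr r z := by
    rw [corr, ← hgeom, ← (summable_pow_succ hz2).tsum_add (summable_corrTerm hr0 hr1 hz1 hz2.le)]
    exact tsum_congr (term_eq_add_corrTerm hr0.le hr1 z)
  rw [villatK_eq_tsum_term, hsplit, kernelExt]
  field_simp
  ring

noncomputable def coeff (r ρ : ℝ) (k : ℕ) : ℝ :=
  (1 - r ^ (2 * (k + 1)) / ρ ^ (2 * (k + 1))) / (1 - r ^ (2 * (k + 1)))

lemma re_term (r : ℝ) (z : ℂ) (k : ℕ) : (term r z k).re = coeff r ‖z‖ k * (z ^ (k + 1)).re := by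
  have hnum : (r : ℂ) ^ (2 * (k + 1)) = ((r ^ (2 * (k + 1)) : ℝ) : ℂ) := by push_cast; rfl
  have hden : (1 : ℂ) - (r : ℂ) ^ (2 * (k + 1)) = ((1 - r ^ (2 * (k + 1)) : ℝ) : ℂ) := by
    push_cast; rfl
  rw [term, hden, hnum, inv_pow, div_ofReal_re, sub_re, re_ofReal_mul, inv_re, normSq_eq_norm_sq,
    norm_pow, coeff]
  ring

lemma coeff_nonneg (hr0 : 0 ≤ r) (hr1 : r < 1) {ρ : ℝ} (hρ : r ≤ ρ) (k : ℕ) :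
    0 ≤ coeff r ρ k := by
  have hpow : r ^ (2 * (k + 1)) ≤ ρ ^ (2 * (k + 1)) := pow_le_pow_left₀ hr0 hρ _
  refine div_nonneg (sub_nonneg.mpr (div_le_one_of_le₀ hpow (pow_nonneg (hr0.trans hρ) _))) ?_
  linarith [one_sub_sq_le_one_sub_pow hr0 hr1.le k, pow_lt_one₀ hr0 hr1 two_ne_zero]

lemma re_two_mul (c : ℂ) : (2 * c).re = 2 * c.re := by
  simp only [mul_re, re_ofNat, im_ofNat, zero_mul, sub_zero]

lemma re_villatK (h : Summable (term r z)) :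
    (villatK r z).re = 1 + 2 * ∑' k, (term r z k).re := by
  rw [villatK_eq_tsum_term, add_re, one_re, re_two_mul, re_tsum h]

lemma re_villatK_eq_one_of_norm_eq (hr0 : 0 < r) (hr1 : r < 1) (hz : ‖z‖ = r) :
    (villatK r z).re = 1 := by
  have hcoeff : ∀ k, coeff r r k = 0 := fun k => by
    rw [coeff, div_self (by positivity), sub_self, zero_div]
  rw [re_villatK (summable_term hr0 hr1 hz.ge (hz ▸ hr1))]
  simp [re_term, hz, hcoeff]

lemma re_corr_of_norm_eq_one (hr0 : 0 < r) (hr1 : r < 1) (hz : ‖z‖ = 1) : (corr r z).re = 0 := by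
  have hterm : ∀ k, (corrTerm r z k).re = 0 := fun k => by
    have hcoeff : coeff r 1 k = 1 := by
      rw [coeff, one_pow, div_one, div_self ((one_sub_pow_pos hr0.le hr1 k).ne')]
    rw [← add_sub_cancel_left (z ^ (k + 1)) (corrTerm r z k), ← term_eq_add_corrTerm hr0.le hr1,
      sub_re, re_term, hz, hcoeff, one_mul, sub_self]
  rw [corr, re_tsum (summable_corrTerm hr0 hr1 (hz ▸ hr1.le) hz.le)]
  simp [hterm]

lemma re_villatK_le_villatK_norm (hr0 : 0 < r) (hr1 : r < 1) (hz1 : r < ‖z‖) (hz2 : ‖z‖ < 1) :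
    (villatK r z).re ≤ (villatK r ‖z‖).re := by
  have hnorm : ‖((‖z‖ : ℝ) : ℂ)‖ = ‖z‖ := by simp
  have hs := summable_term hr0 hr1 hz1.le hz2
  have hs' := summable_term hr0 hr1 (hnorm.symm ▸ hz1.le) (hnorm.symm ▸ hz2)
  have hterm : ∀ k, (term r z k).re ≤ (term r ‖z‖ k).re := fun k => by
    rw [re_term, re_term, hnorm, ← ofReal_pow, ofReal_re]
    gcongr
    · exact coeff_nonneg hr0.le hr1 hz1.le k
    · exact (re_le_norm _).trans (norm_pow z _).le
  rw [re_villatK hs, re_villatK hs']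
  linarith [(hasSum_re hs.hasSum).summable.tsum_le_tsum hterm (hasSum_re hs'.hasSum).summable]

lemma geometric_difference_le (hr0 : 0 < r) {ρ : ℝ} (h1 : r < ρ) (h2 : ρ < 1) :
    (r / ρ / (1 - r / ρ) - r * ρ / (1 - r * ρ)) / (1 - r ^ 2) ≤
      2 * r * (1 - ρ) / ((ρ - r) * (1 - r) ^ 2) := by
  have hρ : 0 < ρ := hr0.trans h1
  have hA : 0 < ρ - r := by linarith
  have hB : 0 < 1 - r * ρ := by nlinarith
  have hC : 0 < 1 - r ^ 2 := by nlinarith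
  have hlhs : (r / ρ / (1 - r / ρ) - r * ρ / (1 - r * ρ)) / (1 - r ^ 2) =
      r * (1 - ρ) * (1 + ρ) / ((ρ - r) * (1 - r * ρ) * (1 - r ^ 2)) := by
    field_simp
    ring
  rw [hlhs, div_le_div_iff₀ (by positivity) (mul_pos hA (by nlinarith))]
  have key : (1 + ρ) * (1 - r) ^ 2 ≤ 2 * ((1 - r * ρ) * (1 - r ^ 2)) := by
    have k1 : (1 - r) * (1 - r) ≤ (1 - r * ρ) * (1 - r ^ 2) :=
      mul_le_mul (by nlinarith) (by nlinarith) (by linarith) hB.le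
    nlinarith
  have hpos : 0 ≤ r * (1 - ρ) * (ρ - r) := by
    have : 0 ≤ 1 - ρ := by linarith
    positivity
  nlinarith [mul_le_mul_of_nonneg_left key hpos]

lemma re_villatK_div_le (hr0 : 0 < r) (hr1 : r < 1) {ρ : ℝ} (h1 : r < ρ) (h2 : ρ < 1) :
    (villatK r ((r / ρ : ℝ) : ℂ)).re ≤ 1 + 4 * r * (1 - ρ) / ((ρ - r) * (1 - r) ^ 2) := by
  have hρ : 0 < ρ := hr0.trans h1
  set s := r / ρ with hs
  have hs0 : 0 < s := by positivity
  have hs1 : s < 1 := (div_lt_one hρ).mpr h1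
  have hnorm : ‖(s : ℂ)‖ = s := by simp [hs0.le]
  have hsum := summable_term hr0 hr1 (hnorm.symm ▸ (le_div_iff₀ hρ).mpr (by nlinarith))
    (hnorm.symm ▸ hs1)
  have hterm : ∀ k, (term r s k).re ≤ (s ^ (k + 1) - (r * ρ) ^ (k + 1)) / (1 - r ^ 2) := fun k => by
    have hcoeff : coeff r s k = (1 - ρ ^ (2 * (k + 1))) / (1 - r ^ (2 * (k + 1))) := by
      rw [coeff, hs, div_pow, div_div_cancel₀ (by positivity)]
    have hnum : s ^ (k + 1) - (r * ρ) ^ (k + 1) = (1 - ρ ^ (2 * (k + 1))) * s ^ (k + 1) := by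
      rw [hs, pow_mul, div_pow, mul_pow]
      field_simp
      ring
    rw [re_term, hnorm, ← ofReal_pow, ofReal_re, hcoeff, hnum, div_mul_eq_mul_div]
    exact div_le_div_of_nonneg_left
      (mul_nonneg (sub_nonneg.mpr (pow_le_one₀ hρ.le h2.le)) (by positivity))
      (by nlinarith) (one_sub_sq_le_one_sub_pow hr0.le hr1.le k)
  have hbound := ((hasSum_pow_succ hs0.le hs1).sub
    (hasSum_pow_succ (a := r * ρ) (by positivity) (by nlinarith))).div_const (1 - r ^ 2)
  have hle := hasSum_le hterm (hasSum_re hsum.hasSum).summable.hasSum hbound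
  have hgeom := geometric_difference_le hr0 h1 h2
  rw [← hs] at hgeom
  rw [re_villatK hsum, show 4 * r * (1 - ρ) / ((ρ - r) * (1 - r) ^ 2) =
    2 * (2 * r * (1 - ρ) / ((ρ - r) * (1 - r) ^ 2)) by ring]
  linarith

def annulus (r : ℝ) : Set ℂ := {w | r < ‖w‖ ∧ ‖w‖ < 1}

def closedAnnulus (r : ℝ) : Set ℂ := {w | r ≤ ‖w‖ ∧ ‖w‖ ≤ 1}

lemma isOpen_annulus : IsOpen (annulus r) :=
  (isOpen_lt continuous_const continuous_norm).inter (isOpen_lt continuous_norm continuous_const)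

lemma isBounded_annulus : Bornology.IsBounded (annulus r) :=
  isBounded_ball.subset fun _ hw => mem_ball_zero_iff.mpr hw.2

lemma closure_annulus_subset : closure (annulus r) ⊆ closedAnnulus r :=
  closure_minimal (fun _ hw => ⟨hw.1.le, hw.2.le⟩)
    ((isClosed_le continuous_const continuous_norm).inter
      (isClosed_le continuous_norm continuous_const))

lemma norm_eq_of_mem_frontier_annulus (hw : w ∈ frontier (annulus r)) : ‖w‖ = r ∨ ‖w‖ = 1 := by
  rw [isOpen_annulus.frontier_eq] at hw
  obtain ⟨h1, h2⟩ := closure_annulus_subset hw.1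
  by_contra! h
  exact hw.2 ⟨h1.lt_of_ne' h.1, h2.lt_of_ne h.2⟩

lemma differentiableAt_corrTerm (hw : w ≠ 0) (k : ℕ) :
    DifferentiableAt ℂ (fun w => corrTerm r w k) w := by
  unfold corrTerm
  fun_prop (disch := assumption)

lemma continuousOn_corr (hr0 : 0 < r) (hr1 : r < 1) : ContinuousOn (corr r) (closedAnnulus r) :=
  continuousOn_tsum
    (fun k _ hw => (differentiableAt_corrTerm (norm_pos_iff.mp (hr0.trans_le hw.1)) k)
      |>.continuousAt.continuousWithinAt)
    (summable_corrBound hr0.le hr1) fun k _ hw => norm_corrTerm_le hr0 hr1 hw.1 hw.2 k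

lemma differentiableOn_corr (hr0 : 0 < r) (hr1 : r < 1) :
    DifferentiableOn ℂ (corr r) (annulus r) :=
  differentiableOn_tsum_of_summable_norm (summable_corrBound hr0.le hr1)
    (fun k _ hw => (differentiableAt_corrTerm (norm_pos_iff.mp (hr0.trans hw.1)) k)
      |>.differentiableWithinAt)
    isOpen_annulus fun k _ hw => norm_corrTerm_le hr0 hr1 hw.1.le hw.2.le k

lemma re_one_add_div_one_sub_nonneg (hw : ‖w‖ ≤ 1) : 0 ≤ ((1 + w) / (1 - w)).re := by
  have hsq : w.re * w.re + w.im * w.im ≤ 1 := by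
    rw [← normSq_apply, normSq_eq_norm_sq]; nlinarith [norm_nonneg w]
  rw [div_re, ← add_div]
  refine div_nonneg ?_ (normSq_nonneg _)
  simp only [add_re, add_im, sub_re, sub_im, one_re, one_im]
  nlinarith

lemma exists_neg_le_re_kernelExt (hr0 : 0 < r) (hr1 : r < 1) :
    ∃ C, ∀ w ∈ closedAnnulus r, -C ≤ (kernelExt r w).re := by
  obtain ⟨C, hC⟩ := exists_norm_corr_le hr0 hr1
  refine ⟨2 * C, fun w hw => ?_⟩
  have hcorr : -C ≤ (corr r w).re :=
    (neg_le_neg (hC w hw.1 hw.2)).trans (neg_le_of_abs_le (abs_re_le_norm _))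
  rw [kernelExt, add_re, re_two_mul]
  linarith [re_one_add_div_one_sub_nonneg hw.2]

lemma re_kernelExt_nonneg_of_mem_frontier (hr0 : 0 < r) (hr1 : r < 1)
    (hw : w ∈ frontier (annulus r)) : 0 ≤ (kernelExt r w).re := by
  rcases norm_eq_of_mem_frontier_annulus hw with hw | hw
  · rw [← villatK_eq_kernelExt hr0 hr1 hw.ge (hw ▸ hr1), re_villatK_eq_one_of_norm_eq hr0 hr1 hw]
    exact zero_le_one
  · rw [kernelExt, add_re, re_two_mul, re_corr_of_norm_eq_one hr0 hr1 hw, mul_zero, add_zero]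
    exact re_one_add_div_one_sub_nonneg hw.le

lemma differentiableOn_kernelExt (hr0 : 0 < r) (hr1 : r < 1) :
    DifferentiableOn ℂ (kernelExt r) (annulus r) :=
  ((differentiableOn_const 1).add differentiableOn_id |>.div
      ((differentiableOn_const 1).sub differentiableOn_id)
      fun _ hw => one_sub_ne_zero_of_norm_lt_one hw.2).add
    ((differentiableOn_corr hr0 hr1).const_mul 2)

lemma continuousOn_kernelExt (hr0 : 0 < r) (hr1 : r < 1) :
    ContinuousOn (kernelExt r) (closedAnnulus r \ {1}) :=
  ((continuousOn_const.add continuousOn_id).div (continuousOn_const.sub continuousOn_id)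
      fun _ hw => sub_ne_zero.mpr (Ne.symm hw.2)).add
    (((continuousOn_corr hr0 hr1).mono sdiff_subset).const_smul (2 : ℂ))

noncomputable def damped (r t : ℝ) (w : ℂ) : ℂ := (1 - w) * exp (-(t * kernelExt r w))

lemma norm_damped (r t : ℝ) (w : ℂ) :
    ‖damped r t w‖ = ‖1 - w‖ * Real.exp (-(t * (kernelExt r w).re)) := by
  rw [damped, norm_mul, norm_exp, neg_re, re_ofReal_mul]

lemma continuousOn_damped (hr0 : 0 < r) (hr1 : r < 1) {t : ℝ} (ht : 0 ≤ t) :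
    ContinuousOn (damped r t) (closedAnnulus r) := by
  intro w hw
  by_cases hw1 : w = 1
  · subst hw1
    obtain ⟨C, hC⟩ := exists_neg_le_re_kernelExt hr0 hr1
    have hbound : ∀ x ∈ closedAnnulus r, ‖damped r t x‖ ≤ ‖1 - x‖ * Real.exp (t * C) :=
      fun x hx => by
        rw [norm_damped]
        gcongr
        nlinarith [hC x hx]
    have hcont : Continuous fun x : ℂ => ‖1 - x‖ * Real.exp (t * C) := by fun_prop
    have hlim : Tendsto (fun x : ℂ => ‖1 - x‖ * Real.exp (t * C)) (𝓝[closedAnnulus r] 1) (𝓝 0) := by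
      simpa using (hcont.tendsto 1).mono_left nhdsWithin_le_nhds
    simpa [ContinuousWithinAt, damped] using
      squeeze_zero_norm' (eventually_nhdsWithin_of_forall hbound) hlim
  · have hcont : ContinuousOn (damped r t) (closedAnnulus r \ {1}) :=
      (continuousOn_const.sub continuousOn_id).mul
        ((continuousOn_const.mul (continuousOn_kernelExt hr0 hr1)).neg.cexp)
    exact continuousWithinAt_sdiff_singleton.mp (hcont w ⟨hw, hw1⟩)

lemma diffContOnCl_damped (hr0 : 0 < r) (hr1 : r < 1) {t : ℝ} (ht : 0 ≤ t) :
    DiffContOnCl ℂ (damped r t) (annulus r) where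
  differentiableOn := ((differentiableOn_const 1).sub differentiableOn_id).mul
    (((differentiableOn_kernelExt hr0 hr1).const_mul (t : ℂ)).neg.cexp)
  continuousOn := (continuousOn_damped hr0 hr1 ht).mono closure_annulus_subset

lemma norm_damped_le_of_mem_frontier (hr0 : 0 < r) (hr1 : r < 1) {t : ℝ} (ht : 0 ≤ t)
    (hw : w ∈ frontier (annulus r)) : ‖damped r t w‖ ≤ 2 := by
  have hw1 : ‖w‖ ≤ 1 := (closure_annulus_subset (frontier_subset_closure hw)).2
  have hexp : Real.exp (-(t * (kernelExt r w).re)) ≤ 1 :=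
    Real.exp_le_one_iff.mpr
      (neg_nonpos.mpr (mul_nonneg ht (re_kernelExt_nonneg_of_mem_frontier hr0 hr1 hw)))
  rw [norm_damped]
  calc ‖1 - w‖ * Real.exp (-(t * (kernelExt r w).re)) ≤ 2 * 1 := by
        gcongr
        linarith [norm_sub_le 1 w, norm_one (α := ℂ)]
    _ = 2 := mul_one 2

lemma nonneg_of_forall_mul_exp_le {a b c : ℝ} (ha : 0 < a)
    (h : ∀ t : ℝ, 0 < t → a * Real.exp (-(t * b)) ≤ c) : 0 ≤ b := by
  by_contra! hb
  have ht : 0 < (|c| + 1) / (a * -b) := by have := mul_pos ha (neg_pos.mpr hb); positivity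
  have hlin : a * (-((|c| + 1) / (a * -b) * b) + 1) = a + (|c| + 1) := by
    field_simp [hb.ne]
    ring
  have := (mul_le_mul_of_nonneg_left (Real.add_one_le_exp _) ha.le).trans (h _ ht)
  rw [hlin] at this
  linarith [le_abs_self c]

theorem re_villatK_nonneg (hr0 : 0 < r) (hr1 : r < 1) (hz1 : r < ‖z‖) (hz2 : ‖z‖ < 1) :
    0 ≤ (villatK r z).re := by
  have hpos : 0 < ‖1 - z‖ := norm_pos_iff.mpr (one_sub_ne_zero_of_norm_lt_one hz2)
  refine nonneg_of_forall_mul_exp_le (c := 2) hpos fun t ht => ?_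
  have hmax := Complex.norm_le_of_forall_mem_frontier_norm_le isBounded_annulus
    (diffContOnCl_damped hr0 hr1 ht.le)
    (fun w hw => norm_damped_le_of_mem_frontier hr0 hr1 ht.le hw) (subset_closure ⟨hz1, hz2⟩)
  rwa [norm_damped, ← villatK_eq_kernelExt hr0 hr1 hz1.le hz2] at hmax

lemma continuousOn_villatK (hr0 : 0 < r) (hr1 : r < 1) : ContinuousOn (villatK r) (annulus r) :=
  ((continuousOn_kernelExt hr0 hr1).mono fun _ hw =>
      ⟨⟨hw.1.le, hw.2.le⟩, fun h => (one_sub_ne_zero_of_norm_lt_one hw.2) (sub_eq_zero.mpr h.symm)⟩)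
    |>.congr fun _ hw => villatK_eq_kernelExt hr0 hr1 hw.1.le hw.2

lemma integrable_of_continuousOn_sphere {E : Type*} [NormedAddCommGroup E] {μ : Measure ℂ}
    [IsFiniteMeasure μ] (hμ : ∀ᵐ ξ ∂μ, ‖ξ‖ = 1) {g : ℂ → E} (hg : ContinuousOn g (sphere 0 1)) :
    Integrable g μ := by
  have h := hg.integrableOn_compact (μ := μ) (isCompact_sphere 0 1)
  rwa [IntegrableOn, Measure.restrict_eq_self_of_ae_mem
    (hμ.mono fun _ h => mem_sphere_zero_iff_norm.mpr h)] at h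

lemma re_integral {α : Type*} [MeasurableSpace α] {μ : Measure α} {f : α → ℂ}
    (hf : Integrable f μ) : (∫ x, f x ∂μ).re = ∫ x, (f x).re ∂μ :=
  (reCLM.integral_comp_comm hf).symm

lemma re_integral_villatK_nonneg (hr0 : 0 < r) (hr1 : r < 1) (hz1 : r < ‖z‖) (hz2 : ‖z‖ < 1)
    {μ : Measure ℂ} [IsFiniteMeasure μ] (hμ : ∀ᵐ ξ ∂μ, ‖ξ‖ = 1) :
    0 ≤ (∫ ξ, villatK r (z / ξ) ∂μ).re := by
  have hint : Integrable (fun ξ => villatK r (z / ξ)) μ :=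
    integrable_of_continuousOn_sphere hμ <| (continuousOn_villatK hr0 hr1).comp
      (continuousOn_const.div continuousOn_id fun ξ hξ => ne_zero_of_mem_unit_sphere ⟨ξ, hξ⟩)
      fun ξ hξ => by simp_all [annulus]
  rw [re_integral hint]
  exact integral_nonneg_of_ae <| hμ.mono fun ξ hξ =>
    re_villatK_nonneg hr0 hr1 (by simpa [hξ] using hz1) (by simpa [hξ] using hz2)

lemma le_re_integral_one_sub_villatK (hr0 : 0 < r) (hr1 : r < 1) (hz1 : r < ‖z‖) (hz2 : ‖z‖ < 1)
    {μ : Measure ℂ} [IsFiniteMeasure μ] (hμ : ∀ᵐ ξ ∂μ, ‖ξ‖ = 1) :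
    (1 - (villatK r ((r / ‖z‖ : ℝ) : ℂ)).re) * μ.real univ ≤
      (∫ ξ, (1 - villatK r (r * ξ / z)) ∂μ).re := by
  have hz0 : 0 < ‖z‖ := hr0.trans hz1
  have hnorm : ∀ ξ : ℂ, ‖ξ‖ = 1 → ‖(r : ℂ) * ξ / z‖ = r / ‖z‖ := fun ξ hξ => by
    simp [hξ, abs_of_pos hr0]
  have hmem : ∀ ξ : ℂ, ‖ξ‖ = 1 → r < ‖(r : ℂ) * ξ / z‖ ∧ ‖(r : ℂ) * ξ / z‖ < 1 := fun ξ hξ => by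
    rw [hnorm ξ hξ, lt_div_iff₀ hz0, div_lt_one hz0]
    exact ⟨by nlinarith, hz1⟩
  have hint : Integrable (fun ξ => 1 - villatK r (r * ξ / z)) μ :=
    integrable_of_continuousOn_sphere hμ <| continuousOn_const.sub <|
      (continuousOn_villatK hr0 hr1).comp (by fun_prop) fun ξ hξ =>
        hmem ξ (mem_sphere_zero_iff_norm.mp hξ)
  rw [re_integral hint, mul_comm, ← smul_eq_mul, ← integral_const]
  refine integral_mono_ae (integrable_const _) hint.re (hμ.mono fun ξ hξ => ?_)
  have hle := re_villatK_le_villatK_norm hr0 hr1 (hmem ξ hξ).1 (hmem ξ hξ).2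
  rw [hnorm ξ hξ] at hle
  simp only [sub_re, one_re]
  linarith

end Villat

open Villat in
/-- Lower bound for the real part of a function of the class `𝒱_r`:
`−Re p(z) ≤ (K_r(r/|z|) − 1) μ₂(𝕋) ≤ 4r(1−|z|) μ₂(𝕋)/((|z|−r)(1−r)²)`. -/
theorem villat_class_re_lower_bound
    (r : ℝ) (hr : r ∈ Ioo (0:ℝ) 1) (μ₁ μ₂ : Measure ℂ) (p : ℂ → ℂ)
    (hp : IsVillatRep r μ₁ μ₂ p)
    (z : ℂ) (hz₁ : r < ‖z‖) (hz₂ : ‖z‖ < 1) :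
    -(p z).re ≤ ((villatK r ((r / ‖z‖ : ℝ) : ℂ)).re - 1) * (μ₂ Set.univ).toReal ∧
    ((villatK r ((r / ‖z‖ : ℝ) : ℂ)).re - 1) * (μ₂ Set.univ).toReal ≤
      4 * r * (1 - ‖z‖) * (μ₂ Set.univ).toReal / ((‖z‖ - r) * (1 - r) ^ 2) := by
  obtain ⟨hr0, hr1⟩ := hr
  have := hp.finite₁
  have := hp.finite₂
  have h₁ := re_integral_villatK_nonneg hr0 hr1 hz₁ hz₂ (ae_iff.mpr hp.circle₁)
  have h₂ := le_re_integral_one_sub_villatK hr0 hr1 hz₁ hz₂ (ae_iff.mpr hp.circle₂)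
  have hK := re_villatK_div_le hr0 hr1 hz₁ hz₂
  rw [measureReal_def] at h₂
  refine ⟨?_, ?_⟩
  · rw [hp.repr z hz₁ hz₂, add_re]
    linarith
  · rw [mul_div_right_comm]
    exact mul_le_mul_of_nonneg_right (by linarith) ENNReal.toReal_nonneg
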